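/- Let D be a τ-atomic integral domain with τ symmetric, refinable, and associate preserving. If every x ∈ D^# has only finitely many τ-irreducible τ-divisors up to associates (D is a τ-atomic τ-idf domain), then D is a τ-finite factorization domain. -/

import Mathlib

/-- `a` is a nonzero nonunit, i.e. an element of `D^#`. -/
def NzNonunit {D : Type*} [CommRing D] (a : D) : Prop := a ≠ 0 ∧ ¬ IsUnit a

/-- `l` is the list of factors of a `τ`-factorization of `a`:
`a = λ * l.prod` for a unit `λ`, the factors are nonzero nonunits and pairwise `τ`-related. -/
def TauFact {D : Type*} [CommRing D] (τ : D → D → Prop) (l : List D) (a : D) : Prop :=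
  l ≠ [] ∧ (∀ b ∈ l, NzNonunit b) ∧ l.Pairwise τ ∧ ∃ u : Dˣ, a = (u : D) * l.prod

/-- `b` τ-divides `a`: `b` occurs as a factor in some τ-factorization of `a`. -/
def TauDvd {D : Type*} [CommRing D] (τ : D → D → Prop) (b a : D) : Prop :=
  ∃ l, TauFact τ l a ∧ b ∈ l

/-- `a` is τ-irreducible (a τ-atom): all its τ-factorizations are trivial. -/
def TauIrred {D : Type*} [CommRing D] (τ : D → D → Prop) (a : D) : Prop :=
  NzNonunit a ∧ ∀ l, TauFact τ l a → l.length = 1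

/-- `l` is a τ-atomic factorization of `a`. -/
def TauAtomicFact {D : Type*} [CommRing D] (τ : D → D → Prop) (l : List D) (a : D) : Prop :=
  TauFact τ l a ∧ ∀ b ∈ l, TauIrred τ b

/-- `D` is τ-atomic: every nonzero nonunit has a τ-atomic factorization. -/
def TauAtomic {D : Type*} [CommRing D] (τ : D → D → Prop) : Prop :=
  ∀ a : D, NzNonunit a → ∃ l, TauAtomicFact τ l a

def TauSymm {D : Type*} [CommRing D] (τ : D → D → Prop) : Prop :=
  ∀ a b, τ a b → τ b a

/-- τ is associate preserving. -/
def TauAssocPres {D : Type*} [CommRing D] (τ : D → D → Prop) : Prop :=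
  ∀ a b b' : D, τ a b → Associated b b' → τ a b'

/-- τ is refinable: replacing each factor of a τ-factorization by a
τ-factorization of it again yields a τ-factorization. -/
def TauRefinable {D : Type*} [CommRing D] (τ : D → D → Prop) : Prop :=
  ∀ (a : D) (l : List D) (F : List (List D)),
    TauFact τ l a → List.Forall₂ (fun b m => TauFact τ m b) l F →
    TauFact τ F.flatten a

/-- `a` is a vertex of the τ-irreducible divisor graph `G_τ(x)`. -/
def GVert {D : Type*} [CommRing D] (τ : D → D → Prop) (x a : D) : Prop :=
  TauIrred τ a ∧ TauDvd τ a x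

/-- `a` and `b` are adjacent (distinct, i.e. non-associated, vertices joined by an edge)
in `G_τ(x)`: some τ-factorization of `x` contains associates of both. -/
def GAdj {D : Type*} [CommRing D] (τ : D → D → Prop) (x a b : D) : Prop :=
  GVert τ x a ∧ GVert τ x b ∧ ¬ Associated a b ∧
  ∃ l, TauFact τ l x ∧ (∃ a' ∈ l, Associated a a') ∧ (∃ b' ∈ l, Associated b b')

/-- `G_τ(x)` is connected (vertices are taken up to associates). -/
def GConnected {D : Type*} [CommRing D] (τ : D → D → Prop) (x : D) : Prop :=
  ∀ a b, GVert τ x a → GVert τ x b →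
    Relation.ReflTransGen (fun u v => GAdj τ x u v ∨ Associated u v) a b

/-- The reduced graph `G̅_τ(x)` (loops deleted) is connected; loops do not affect
connectivity, so this is connectivity with respect to the same adjacency relation. -/
def GBarConnected {D : Type*} [CommRing D] (τ : D → D → Prop) (x : D) : Prop :=
  ∀ a b, GVert τ x a → GVert τ x b →
    Relation.ReflTransGen (fun u v => GAdj τ x u v ∨ Associated u v) a b

/-- `G_τ(x)` is a pseudoclique: any two non-associated vertices are adjacent.
(Equivalently, the reduced graph `G̅_τ(x)` is a clique / complete graph.) -/
def GPseudoclique {D : Type*} [CommRing D] (τ : D → D → Prop) (x : D) : Prop :=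
  ∀ a b, GVert τ x a → GVert τ x b → ¬ Associated a b → GAdj τ x a b

/-- `Diam(G_τ(x)) ≤ 1`: any two vertices are equal (associated) or adjacent. -/
def GDiamLeOne {D : Type*} [CommRing D] (τ : D → D → Prop) (x : D) : Prop :=
  ∀ a b, GVert τ x a → GVert τ x b → Associated a b ∨ GAdj τ x a b

/-- `G_τ(x)` has finitely many vertices (up to associates). -/
def GVertFinite {D : Type*} [CommRing D] (τ : D → D → Prop) (x : D) : Prop :=
  ∃ s : Finset D, ∀ a, GVert τ x a → ∃ c ∈ s, Associated a c

/-- The vertex `a` of `G_τ(x)` has finite degree: finitely many adjacent vertices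
up to associates (loops not counted). -/
def GDegFinite {D : Type*} [CommRing D] (τ : D → D → Prop) (x a : D) : Prop :=
  ∃ s : Finset D, ∀ b, GAdj τ x a b → ∃ c ∈ s, Associated b c

/-- The vertex `a` of `G_τ(x)` carries finitely many loops: there is a uniform bound on
the number of occurrences of associates of `a` in τ-atomic factorizations of `x`. -/
def GLoopsFinite {D : Type*} [CommRing D] (τ : D → D → Prop) (x a : D) : Prop :=
  ∃ N : ℕ, ∀ l m : List D, TauAtomicFact τ l x → m.Sublist l →
    (∀ b ∈ m, Associated a b) → m.length ≤ N

/-- `D` satisfies τ-ACCP. -/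
def TauACCP {D : Type*} [CommRing D] (τ : D → D → Prop) : Prop :=
  ∀ a : ℕ → D, (∀ i, TauDvd τ (a (i + 1)) (a i)) →
    ∃ N, ∀ i, N ≤ i → Associated (a i) (a N)

/-- `D` is a τ-UFD. -/
def TauUFD {D : Type*} [CommRing D] (τ : D → D → Prop) : Prop :=
  TauAtomic τ ∧ ∀ (x : D) (l₁ l₂ : List D), TauAtomicFact τ l₁ x → TauAtomicFact τ l₂ x →
    Multiset.Rel Associated (l₁ : Multiset D) (l₂ : Multiset D)

/-- `D` is a τ-FFD: each nonzero nonunit has only finitely many τ-factorizations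
up to rearrangement and associates. -/
def TauFFD {D : Type*} [CommRing D] (τ : D → D → Prop) : Prop :=
  ∀ x : D, NzNonunit x → ∃ S : Finset (Multiset D),
    ∀ l : List D, TauFact τ l x → ∃ m ∈ S, Multiset.Rel Associated (l : Multiset D) m

/-- `D` is a τ-WFFD: each nonzero nonunit has finitely many τ-divisors up to associates. -/
def TauWFFD {D : Type*} [CommRing D] (τ : D → D → Prop) : Prop :=
  ∀ x : D, NzNonunit x → ∃ s : Finset D,
    ∀ b, TauDvd τ b x → ∃ c ∈ s, Associated b c

/-- `D` is a τ-idf domain: each nonzero nonunit has finitely many τ-irreducible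
τ-divisors up to associates. -/
def TauIdf {D : Type*} [CommRing D] (τ : D → D → Prop) : Prop :=
  ∀ x : D, NzNonunit x → ∃ s : Finset D,
    ∀ b, TauIrred τ b → TauDvd τ b x → ∃ c ∈ s, Associated b c


/-!
Fix representatives `s` of the finitely many τ-atoms τ-dividing `x`. Replacing the atoms of a
τ-atomic factorization of `x` by their representatives gives a multiset over `s` whose product is
associated to `x`; such multisets form an antichain under inclusion (the difference of two
comparable ones would be a product of nonunits that is a unit), so by Dickson's lemma there are
finitely many of them and the τ-atomic factorizations of `x` have bounded length `N`. Refining an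
arbitrary τ-factorization of `x` into τ-atoms then shows that it has at most `N` factors, each
associated to a product of at most `N` elements of `s`: only finitely many possibilities.
-/

theorem Multiset.eq_of_le_of_associated_prod {α : Type*} [CommMonoidWithZero α] [IsCancelMulZero α]
    {M M' : Multiset α} (hle : M ≤ M') (hprod : Associated M.prod M'.prod) (h0 : M'.prod ≠ 0)
    (hM' : ∀ p ∈ M', ¬IsUnit p) : M = M' := by
  obtain ⟨K, rfl⟩ := Multiset.le_iff_exists_add.1 hle
  rw [Multiset.prod_add] at hprod h0
  have hK : IsUnit K.prod := isUnit_of_associated_mul hprod.symm (left_ne_zero_of_mul h0)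
  suffices K = 0 by rw [this, add_zero]
  refine Multiset.eq_zero_of_forall_notMem fun p hp => ?_
  exact hM' p (Multiset.mem_add.2 (Or.inr hp)) (isUnit_of_dvd_unit (Multiset.dvd_prod hp) hK)

theorem finite_setOf_multiset_associated_prod {α : Type*} [CommMonoidWithZero α] [IsCancelMulZero α]
    {x : α} (hx : x ≠ 0) (s : Finset α) (hs : ∀ p ∈ s, ¬IsUnit p) :
    {M : Multiset α | (∀ p ∈ M, p ∈ s) ∧ Associated M.prod x}.Finite := by
  classical
  have : WellQuasiOrderedLE (Multiset s) :=
    Finsupp.orderIsoMultiset.wellQuasiOrderedLE_iff.1 inferInstance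
  have hanti : IsAntichain (· ≤ ·) {M : Multiset s | Associated (M.map (↑)).prod x} := by
    intro M hM M' hM' hne hle
    refine hne (Multiset.map_injective Subtype.val_injective ?_)
    refine Multiset.eq_of_le_of_associated_prod (Multiset.map_le_map hle) (hM.trans hM'.symm)
      (hM'.ne_zero_iff.2 hx) ?_
    simp only [Multiset.mem_map]
    rintro _ ⟨p, -, rfl⟩
    exact hs p p.2
  refine ((WellQuasiOrderedLE.finite_of_isAntichain hanti).image (Multiset.map (↑))).subset ?_
  rintro M ⟨hMs, hMx⟩
  lift M to Multiset s using hMs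
  exact ⟨M, hMx, rfl⟩

theorem List.finite_setOf_forall_mem_length_le {α : Type*} {s : Set α} (hs : s.Finite) (n : ℕ) :
    {l : List α | (∀ a ∈ l, a ∈ s) ∧ l.length ≤ n}.Finite := by
  have := hs.to_subtype
  refine ((List.finite_length_le s n).image (List.map (↑))).subset ?_
  rintro l ⟨hls, hln⟩
  lift l to List s using hls
  exact ⟨l, by simpa using hln, rfl⟩

theorem List.length_le_length_flatten_map {α β : Type*} {l : List α} {f : α → List β}
    (hf : ∀ a ∈ l, f a ≠ []) : l.length ≤ (l.map f).flatten.length := by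
  rw [List.length_flatten, List.map_map]
  simpa using List.length_le_sum_of_one_le (l.map (List.length ∘ f))
    (by simpa [List.length_pos_iff, Nat.one_le_iff_ne_zero] using hf)

theorem List.associated_prod_map {α : Type*} [CommMonoid α] {l : List α} {f : α → α}
    (hf : ∀ a ∈ l, Associated a (f a)) : Associated l.prod (l.map f).prod :=
  List.rel_prod (Associated.refl 1) (fun _ _ h _ _ h' => h.mul_mul h')
    (List.forall₂_map_right_iff.2 (List.forall₂_same.2 hf))

section TauFactorization

variable {D : Type*} [CommRing D] {τ : D → D → Prop}

theorem TauFact.associated_prod {l : List D} {a : D} (h : TauFact τ l a) : Associated a l.prod := by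
  obtain ⟨u, hu⟩ := h.2.2.2
  exact hu ▸ associated_unit_mul_left _ _ u.isUnit

theorem TauFact.tauAtomicFact_flatten_map (href : TauRefinable τ) {fact : D → List D}
    (hfact : ∀ a, NzNonunit a → TauAtomicFact τ (fact a) a) {l : List D} {x : D}
    (hl : TauFact τ l x) : TauAtomicFact τ (l.map fact).flatten x := by
  refine ⟨href x l _ hl ?_, fun a ha => ?_⟩
  · exact List.forall₂_map_right_iff.2 (List.forall₂_same.2 fun b hb => (hfact b (hl.2.1 b hb)).1)
  · obtain ⟨_, hm, ham⟩ := List.mem_flatten.1 ha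
    obtain ⟨b, hb, rfl⟩ := List.mem_map.1 hm
    exact (hfact b (hl.2.1 b hb)).2 a ham

theorem TauIdf.exists_finset_rep (hidf : TauIdf τ) {x : D} (hx : NzNonunit x) :
    ∃ (s : Finset D) (rep : D → D), (∀ p ∈ s, ¬IsUnit p) ∧
      ∀ a, TauIrred τ a → TauDvd τ a x → rep a ∈ s ∧ Associated a (rep a) := by
  classical
  obtain ⟨s, hs⟩ := hidf x hx
  have hrep : ∀ a, TauIrred τ a ∧ TauDvd τ a x →
      ∃ c, c ∈ s.filter (¬IsUnit ·) ∧ Associated a c := by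
    rintro a ⟨ha, hax⟩
    obtain ⟨c, hc, hac⟩ := hs a ha hax
    exact ⟨c, Finset.mem_filter.2 ⟨hc, hac.isUnit_iff.not.1 ha.1.2⟩, hac⟩
  choose! rep hrep using hrep
  exact ⟨_, rep, fun p hp => (Finset.mem_filter.1 hp).2, fun a ha hax => hrep a ⟨ha, hax⟩⟩

theorem exists_length_le_of_tauAtomicFact [IsDomain D] {x : D} (hx : x ≠ 0) {s : Finset D}
    (hs : ∀ p ∈ s, ¬IsUnit p) {rep : D → D}
    (hrep : ∀ a, TauIrred τ a → TauDvd τ a x → rep a ∈ s ∧ Associated a (rep a)) :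
    ∃ N, ∀ L, TauAtomicFact τ L x → L.length ≤ N := by
  obtain ⟨N, hN⟩ := ((finite_setOf_multiset_associated_prod hx s hs).image Multiset.card).bddAbove
  refine ⟨N, fun L hL => ?_⟩
  have hrepL : ∀ a ∈ L, rep a ∈ s ∧ Associated a (rep a) :=
    fun a ha => hrep a (hL.2 a ha) ⟨L, hL.1, ha⟩
  have hmem : ((L.map rep : List D) : Multiset D) ∈
      {M : Multiset D | (∀ p ∈ M, p ∈ s) ∧ Associated M.prod x} := by
    refine ⟨fun p hp => ?_, ?_⟩
    · obtain ⟨a, ha, rfl⟩ := List.mem_map.1 (Multiset.mem_coe.1 hp)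
      exact (hrepL a ha).1
    · simpa using ((List.associated_prod_map fun a ha => (hrepL a ha).2).symm.trans
        hL.1.associated_prod.symm)
  simpa using hN ⟨_, hmem, rfl⟩

theorem TauFact.exists_rel_associated_of_length_le (href : TauRefinable τ) {fact : D → List D}
    (hfact : ∀ a, NzNonunit a → TauAtomicFact τ (fact a) a) {x : D} {s : Finset D} {rep : D → D}
    (hrep : ∀ a, TauIrred τ a → TauDvd τ a x → rep a ∈ s ∧ Associated a (rep a)) {N : ℕ}
    (hN : ∀ L, TauAtomicFact τ L x → L.length ≤ N) {l : List D} (hl : TauFact τ l x) :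
    ∃ m : List D, ((∀ t ∈ m, t ∈ List.prod '' {k | (∀ p ∈ k, p ∈ s) ∧ k.length ≤ N}) ∧
      m.length ≤ N) ∧ Multiset.Rel Associated (l : Multiset D) m := by
  have hL := hl.tauAtomicFact_flatten_map href hfact
  have hLN := hN _ hL
  have hblock : ∀ b ∈ l, (fact b).length ≤ N := fun b hb =>
    ((List.sublist_flatten_of_mem (List.mem_map_of_mem hb)).length_le).trans hLN
  have hrepL : ∀ b ∈ l, ∀ a ∈ fact b, rep a ∈ s ∧ Associated a (rep a) := fun b hb a ha =>
    hrep a (hL.2 a (List.mem_flatten_of_mem (List.mem_map_of_mem hb) ha))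
      ⟨_, hL.1, List.mem_flatten_of_mem (List.mem_map_of_mem hb) ha⟩
  refine ⟨l.map fun b => ((fact b).map rep).prod, ⟨fun t ht => ?_, ?_⟩, ?_⟩
  · obtain ⟨b, hb, rfl⟩ := List.mem_map.1 ht
    refine ⟨_, ⟨fun p hp => ?_, by simpa using hblock b hb⟩, rfl⟩
    obtain ⟨a, ha, rfl⟩ := List.mem_map.1 hp
    exact (hrepL b hb a ha).1
  · have hlL := List.length_le_length_flatten_map fun b hb => (hfact b (hl.2.1 b hb)).1.1
    simpa using hlL.trans hLN
  · rw [← Multiset.map_coe, Multiset.rel_map_right]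
    refine Multiset.rel_refl_of_refl_on fun b hb => ?_
    rw [Multiset.mem_coe] at hb
    exact (hfact b (hl.2.1 b hb)).1.associated_prod.trans
      (List.associated_prod_map fun a ha => (hrepL b hb a ha).2)

end TauFactorization

theorem stmt11_general {D : Type*} [CommRing D] [IsDomain D] (τ : D → D → Prop)
    (href : TauRefinable τ) (hatomic : TauAtomic τ) (hidf : TauIdf τ) :
    TauFFD τ := by
  intro x hx
  obtain ⟨s, rep, hs, hrep⟩ := hidf.exists_finset_rep hx
  obtain ⟨N, hN⟩ := exists_length_le_of_tauAtomicFact hx.1 hs hrep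
  choose! fact hfact using hatomic
  have hT := (List.finite_setOf_forall_mem_length_le s.finite_toSet N).image List.prod
  refine ⟨((List.finite_setOf_forall_mem_length_le hT N).image
    ((↑) : List D → Multiset D)).toFinset, fun l hl => ?_⟩
  obtain ⟨m, hm, hlm⟩ := hl.exists_rel_associated_of_length_le href hfact hrep hN
  exact ⟨m, (Set.Finite.mem_toFinset _).2 ⟨m, hm, rfl⟩, hlm⟩

theorem stmt11 {D : Type*} [CommRing D] [IsDomain D] (τ : D → D → Prop)
    (hsym : TauSymm τ) (href : TauRefinable τ) (hap : TauAssocPres τ)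
    (hatomic : TauAtomic τ) (hidf : TauIdf τ) :
    TauFFD τ :=
  stmt11_general τ href hatomic hidf
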